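/- Let 𝒟 ⊆ 𝒞 be subcategories of 𝓑 satisfying condition (RCP) and set ℋ_𝒟 := CoCone(𝒟,𝒞). If a morphism g : A → B with A, B ∈ ℋ_𝒟 factors through an object of 𝒟^⊥¹, then g factors through an object of 𝒟^⊥¹ ∩ ℋ_𝒟. -/

import Mathlib

open CategoryTheory Category Limits ZeroObject

universe v u

namespace CotorsionPaper

variable {B : Type u} [Category.{v} B] [Abelian B]

/-- `f, g` form a short exact sequence `0 → X → Y → Z → 0`. -/
def IsSES {X Y Z : B} (f : X ⟶ Y) (g : Y ⟶ Z) : Prop :=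
  ∃ w : f ≫ g = 0, (ShortComplex.mk f g w).ShortExact

/-- `Ext¹(X, Y) = 0`: every short exact sequence `0 → Y → E → X → 0` splits. -/
def Ext1Zero (X Y : B) : Prop :=
  ∀ ⦃E : B⦄ (i : Y ⟶ E) (p : E ⟶ X), IsSES i p → ∃ s : X ⟶ E, s ≫ p = 𝟙 X

/-- `Ext²(X, Y) = 0`, via dimension shifting: `Ext¹(K, Y) = 0` for any syzygy `K` of `X`. -/
def Ext2Zero (X Y : B) : Prop :=
  ∀ ⦃K P : B⦄ (i : K ⟶ P) (p : P ⟶ X), Projective P → IsSES i p → Ext1Zero K Y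

/-- A (strictly) full additive subcategory: closed under isomorphisms,
contains a zero object and is closed under finite direct sums. -/
structure AddSubcat (S : Set B) : Prop where
  zero_mem : (0 : B) ∈ S
  iso_closed : ∀ ⦃X Y : B⦄, (X ≅ Y) → X ∈ S → Y ∈ S
  sum_closed : ∀ ⦃X Y : B⦄, X ∈ S → Y ∈ S → (X ⊞ Y) ∈ S

/-- `S` is closed under direct summands (retracts). -/
def ClosedUnderSummands (S : Set B) : Prop :=
  ∀ ⦃X Y : B⦄ (r : X ⟶ Y) (s : Y ⟶ X), s ≫ r = 𝟙 Y → X ∈ S → Y ∈ S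

/-- `S` is rigid: `Ext¹(X, Y) = 0` for all `X, Y ∈ S`. -/
def Rigid (S : Set B) : Prop :=
  ∀ ⦃X⦄, X ∈ S → ∀ ⦃Y⦄, Y ∈ S → Ext1Zero X Y

/-- `S^⊥¹`. -/
def rightPerp (S : Set B) : Set B := {Y | ∀ ⦃X⦄, X ∈ S → Ext1Zero X Y}

/-- `^⊥¹S`. -/
def leftPerp (S : Set B) : Set B := {X | ∀ ⦃Y⦄, Y ∈ S → Ext1Zero X Y}

/-- `f : X ⟶ A` is a right `S`-approximation of `A`. -/
def IsRightApprox (S : Set B) {X A : B} (f : X ⟶ A) : Prop :=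
  X ∈ S ∧ ∀ ⦃X' : B⦄, X' ∈ S → ∀ g : X' ⟶ A, ∃ h : X' ⟶ X, h ≫ f = g

def ContravariantlyFinite (S : Set B) : Prop :=
  ∀ A : B, ∃ (X : B) (f : X ⟶ A), IsRightApprox S f

/-- `f : A ⟶ X` is a left `S`-approximation of `A`. -/
def IsLeftApprox (S : Set B) {A X : B} (f : A ⟶ X) : Prop :=
  X ∈ S ∧ ∀ ⦃X' : B⦄, X' ∈ S → ∀ g : A ⟶ X', ∃ h : X ⟶ X', f ≫ h = g

def CovariantlyFinite (S : Set B) : Prop :=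
  ∀ A : B, ∃ (X : B) (f : A ⟶ X), IsLeftApprox S f

/-- `(U, V)` is a cotorsion pair. -/
structure CotorsionPair (U V : Set B) : Prop where
  summands_left : ClosedUnderSummands U
  summands_right : ClosedUnderSummands V
  ext : ∀ ⦃X⦄, X ∈ U → ∀ ⦃Y⦄, Y ∈ V → Ext1Zero X Y
  resol : ∀ X : B, ∃ (VX UX : B) (i : VX ⟶ UX) (p : UX ⟶ X),
    VX ∈ V ∧ UX ∈ U ∧ IsSES i p
  coresol : ∀ X : B, ∃ (VX UX : B) (i : X ⟶ VX) (p : VX ⟶ UX),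
    VX ∈ V ∧ UX ∈ U ∧ IsSES i p

/-- `CoCone(S, T)`. -/
def CoCone (S T : Set B) : Set B :=
  {X | ∃ (B' B'' : B) (i : X ⟶ B') (p : B' ⟶ B''), B' ∈ S ∧ B'' ∈ T ∧ IsSES i p}

/-- `Cone(S, T)`. -/
def Cone (S T : Set B) : Set B :=
  {X | ∃ (B' B'' : B) (i : B' ⟶ B'') (p : B'' ⟶ X), B' ∈ S ∧ B'' ∈ T ∧ IsSES i p}

/-- The subcategory `𝒫` of projective objects. -/
def projSet : Set B := {P | Projective P}

/-- The subcategory `ℐ` of injective objects. -/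
def injSet : Set B := {I | Injective I}

/-- `Ω𝒞`, the (first) syzygy of `𝒞`. -/
def Syz (C : Set B) : Set B := CoCone projSet C

/-- Condition (RCP): `𝒫 ⊆ 𝒞`, `𝒞` rigid, contravariantly finite,
closed under direct summands (and a full additive subcategory). -/
structure RCP (C : Set B) : Prop where
  add : AddSubcat C
  proj_mem : ∀ ⦃P : B⦄, Projective P → P ∈ C
  rigid : Rigid C
  contra : ContravariantlyFinite C
  summands : ClosedUnderSummands C

/-- `f` factors through an object of `S`. -/
def FactorsThru (S : Set B) {X Y : B} (f : X ⟶ Y) : Prop :=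
  ∃ (Z : B) (g : X ⟶ Z) (h : Z ⟶ Y), Z ∈ S ∧ g ≫ h = f

/-- The ideal of morphisms of the full subcategory on `H` factoring through an object of `S`. -/
def idealRel (H S : Set B) : HomRel (ObjectProperty.FullSubcategory (show ObjectProperty B from H)) :=
  fun X Y f g => FactorsThru S (show X.obj ⟶ Y.obj from f.hom - g.hom)

/-- The ideal quotient `H/S`. -/
abbrev HeartCat (H S : Set B) := CategoryTheory.Quotient (idealRel H S)

/-- The quotient functor `H → H/S`. -/
abbrev heartQ (H S : Set B) : ObjectProperty.FullSubcategory (show ObjectProperty B from H) ⥤ HeartCat H S :=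
  CategoryTheory.Quotient.functor _

/-- The zero morphism in the ideal quotient `H/S`. -/
def heartZero (H S : Set B) (X Y : HeartCat H S) : X ⟶ Y :=
  (heartQ H S).map (0 : X.as ⟶ Y.as)

/-- `κ` is a kernel of `φ` in the ideal quotient `H/S`. -/
structure IsKernelArrow {H S : Set B} {K X Y : HeartCat H S}
    (κ : K ⟶ X) (φ : X ⟶ Y) : Prop where
  w : κ ≫ φ = heartZero H S K Y
  lift : ∀ ⦃T : HeartCat H S⦄ (t : T ⟶ X), t ≫ φ = heartZero H S T Y →
    ∃! u : T ⟶ K, u ≫ κ = t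

/-- `π` is a cokernel of `φ` in the ideal quotient `H/S`. -/
structure IsCokernelArrow {H S : Set B} {X Y Q : HeartCat H S}
    (φ : X ⟶ Y) (π : Y ⟶ Q) : Prop where
  w : φ ≫ π = heartZero H S X Q
  desc : ∀ ⦃T : HeartCat H S⦄ (t : Y ⟶ T), φ ≫ t = heartZero H S X T →
    ∃! u : Q ⟶ T, π ≫ u = t

/-- The class of epimorphisms in `H/S` whose kernel object lies in `A`. -/
def epiClassWithKernelIn (H S A : Set B) : MorphismProperty (HeartCat H S) :=
  fun X Y φ => Epi φ ∧ ∃ (K : HeartCat H S) (κ : K ⟶ X),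
    K.as.obj ∈ A ∧ IsKernelArrow κ φ

/-- The class of monomorphisms in `H/S` whose cokernel object lies in `A`. -/
def monoClassWithCokernelIn (H S A : Set B) : MorphismProperty (HeartCat H S) :=
  fun X Y φ => Mono φ ∧ ∃ (Q : HeartCat H S) (π : Y ⟶ Q),
    Q.as.obj ∈ A ∧ IsCokernelArrow φ π

/-- The diagram `(⋄)` associated with a morphism `f : Y ⟶ X`. -/
structure DiamondDiagram {Y X : B} (f : Y ⟶ X) {OmX PX Z₁ IY SgY Z₂ : B}
    (q : OmX ⟶ PX) (p : PX ⟶ X) (j : OmX ⟶ Z₁) (g : Z₁ ⟶ Y)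
    (i : Y ⟶ IY) (c : IY ⟶ SgY) (h : X ⟶ Z₂) (e : Z₂ ⟶ SgY)
    (u : Z₁ ⟶ PX) (v : IY ⟶ Z₂) : Prop where
  projPX : Projective PX
  injIY : Injective IY
  ses_proj : IsSES q p
  ses_pullback : IsSES j g
  ses_inj : IsSES i c
  ses_pushout : IsSES h e
  comm₁ : j ≫ u = q
  comm₂ : u ≫ p = g ≫ f
  comm₃ : f ≫ h = i ≫ v
  comm₄ : v ≫ e = c

/-- The class of morphisms `f : Y ⟶ X` admitting a diagram `(⋄)` with
`Z₁ ∈ ZCond` and `h` factoring through an object of `HCond`. -/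
def Rclass (ZCond HCond : Set B) : MorphismProperty B :=
  fun Y X f => ∃ (OmX PX Z₁ IY SgY Z₂ : B) (q : OmX ⟶ PX) (p : PX ⟶ X)
    (j : OmX ⟶ Z₁) (g : Z₁ ⟶ Y) (i : Y ⟶ IY) (c : IY ⟶ SgY)
    (h : X ⟶ Z₂) (e : Z₂ ⟶ SgY) (u : Z₁ ⟶ PX) (v : IY ⟶ Z₂),
    DiamondDiagram f q p j g i c h e u v ∧ Z₁ ∈ ZCond ∧ FactorsThru HCond h

/-- The class of morphisms `f : Y ⟶ X` admitting a diagram `(⋄)` with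
`g` factoring through an object of `GCond` and `h` through an object of `HCond`. -/
def RtildeClass (GCond HCond : Set B) : MorphismProperty B :=
  fun Y X f => ∃ (OmX PX Z₁ IY SgY Z₂ : B) (q : OmX ⟶ PX) (p : PX ⟶ X)
    (j : OmX ⟶ Z₁) (g : Z₁ ⟶ Y) (i : Y ⟶ IY) (c : IY ⟶ SgY)
    (h : X ⟶ Z₂) (e : Z₂ ⟶ SgY) (u : Z₁ ⟶ PX) (v : IY ⟶ Z₂),
    DiamondDiagram f q p j g i c h e u v ∧ FactorsThru GCond g ∧ FactorsThru HCond h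

/-- The objects of the heart `ℋ` of a cotorsion pair `(U, V)`. -/
def HeartObjects (U V : Set B) : Set B :=
  {X | (∃ (VX UX : B) (i : VX ⟶ UX) (p : UX ⟶ X),
          IsSES i p ∧ VX ∈ V ∧ UX ∈ U ∩ V) ∧
       (∃ (VX UX : B) (i : X ⟶ VX) (p : VX ⟶ UX),
          IsSES i p ∧ VX ∈ U ∩ V ∧ UX ∈ U)}

/-!
If `g` factors as `A ⟶ W ⟶ X` with `W ∈ 𝒟^⊥¹`, it suffices to embed `A` into some
`Z ∈ 𝒟^⊥¹ ∩ CoCone(𝒟, 𝒞)` with cokernel in `𝒟`: since `Ext¹(𝒟, W) = 0`, the map `A ⟶ W`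
then extends along `A ⟶ Z`.
-/

namespace IsSES

variable {X Y Z : B} {f : X ⟶ Y} {g : Y ⟶ Z}

lemma zero (h : IsSES f g) : f ≫ g = 0 := h.1

lemma mono (h : IsSES f g) : Mono f := h.2.mono_f

lemma epi (h : IsSES f g) : Epi g := h.2.epi_g

lemma of_isLimit (w : f ≫ g = 0) [Epi g] (h : IsLimit (KernelFork.ofι f w)) : IsSES f g :=
  ⟨w, { exact := (ShortComplex.mk f g w).exact_of_f_is_kernel h,
        mono_f := mono_of_isLimit_fork h, epi_g := ‹_› }⟩

lemma of_isColimit (w : f ≫ g = 0) [Mono f] (h : IsColimit (CokernelCofork.ofπ g w)) :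
    IsSES f g :=
  ⟨w, { exact := (ShortComplex.mk f g w).exact_of_g_is_cokernel h,
        mono_f := ‹_›, epi_g := epi_of_isColimit_cofork h }⟩

lemma kernel_ι (g : Y ⟶ Z) [Epi g] : IsSES (kernel.ι g) g :=
  of_isLimit (kernel.condition g) (kernelIsKernel g)

lemma exists_lift (h : IsSES f g) {T : B} {t : T ⟶ Y} (ht : t ≫ g = 0) :
    ∃ l : T ⟶ X, l ≫ f = t :=
  ⟨_, (KernelFork.IsLimit.lift' h.2.fIsKernel t ht).2⟩

lemma exists_desc (h : IsSES f g) {T : B} {t : Y ⟶ T} (ht : f ≫ t = 0) :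
    ∃ l : Z ⟶ T, g ≫ l = t :=
  ⟨_, (CokernelCofork.IsColimit.desc' h.2.gIsCokernel t ht).2⟩

lemma exists_retraction_of_section (h : IsSES f g) {s : Z ⟶ Y} (hs : s ≫ g = 𝟙 Z) :
    ∃ r : Y ⟶ X, f ≫ r = 𝟙 X :=
  ⟨_, (ShortComplex.Splitting.ofExactOfSection _ h.2.exact s hs h.mono).f_r⟩

lemma exists_section_of_retraction (h : IsSES f g) {r : Y ⟶ X} (hr : f ≫ r = 𝟙 X) :
    ∃ s : Z ⟶ Y, s ≫ g = 𝟙 Z :=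
  ⟨_, (ShortComplex.Splitting.ofExactOfRetraction _ h.2.exact r hr h.epi).s_g⟩

lemma of_isPullback (h : IsSES f g) {P W : B} {fst : P ⟶ Y} {snd : P ⟶ W} {r : W ⟶ Z}
    (hP : IsPullback fst snd g r) : ∃ u : X ⟶ P, IsSES u snd ∧ u ≫ fst = f := by
  have := h.mono
  have : Epi snd := (MorphismProperty.epimorphisms B).of_isPullback hP h.epi
  have hu : hP.lift f 0 (by rw [h.zero, zero_comp]) ≫ snd = 0 := hP.lift_snd _ _ _
  have := mono_of_mono_fac (hP.lift_fst f 0 (by rw [h.zero, zero_comp]))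
  refine ⟨_, of_isLimit hu (KernelFork.IsLimit.ofι' _ hu fun t ht ↦ ?_), hP.lift_fst _ _ _⟩
  let l := KernelFork.IsLimit.lift' h.2.fIsKernel (t ≫ fst)
    (by rw [assoc, hP.w, reassoc_of% ht, zero_comp])
  exact ⟨l.1, hP.hom_ext (by simpa using l.2) (by simp [ht])⟩

lemma of_isPushout (h : IsSES f g) {P W : B} {k : X ⟶ W} {inl : Y ⟶ P} {inr : W ⟶ P}
    (hP : IsPushout f k inl inr) : ∃ π : P ⟶ Z, IsSES inr π ∧ inl ≫ π = g := by
  have := h.epi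
  have : Mono inr := (MorphismProperty.monomorphisms B).of_isPushout hP.flip h.mono
  have hπ : inr ≫ hP.desc g 0 (by rw [h.zero, comp_zero]) = 0 := hP.inr_desc _ _ _
  have := epi_of_epi_fac (hP.inl_desc g 0 (by rw [h.zero, comp_zero]))
  refine ⟨_, of_isColimit hπ (CokernelCofork.IsColimit.ofπ' _ hπ fun t ht ↦ ?_), hP.inl_desc _ _ _⟩
  let l := CokernelCofork.IsColimit.desc' h.2.gIsCokernel (inl ≫ t)
    (by rw [← assoc, hP.w, assoc, ht, comp_zero])
  exact ⟨l.1, hP.hom_ext (by simpa using l.2) (by simp [ht])⟩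

lemma comp_of_isPushout (h : IsSES f g) {M P : B} {m : Y ⟶ M} [Mono m] {inl : M ⟶ P}
    {inr : Z ⟶ P} (hP : IsPushout m g inl inr) : IsSES (f ≫ m) inl := by
  have := h.mono
  have : Epi inl := (MorphismProperty.epimorphisms B).of_isPushout hP h.epi
  have hz : (f ≫ m) ≫ inl = 0 := by rw [assoc, hP.w, reassoc_of% h.zero, zero_comp]
  refine of_isColimit hz (CokernelCofork.IsColimit.ofπ' _ hz fun t ht ↦ ?_)
  let l := CokernelCofork.IsColimit.desc' h.2.gIsCokernel (m ≫ t) (by rw [← assoc, ht])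
  exact ⟨hP.desc t l.1 (by simpa using l.2.symm), hP.inl_desc _ _ _⟩

end IsSES

lemma isSES_biprod_of_isPullback {P Y Z W : B} {fst : P ⟶ Y} {snd : P ⟶ W} {g : Y ⟶ Z}
    {r : W ⟶ Z} (hP : IsPullback fst snd g r) [Epi g] :
    IsSES (biprod.lift fst snd) (biprod.desc g (-r)) :=
  have : Epi (biprod.desc g (-r)) := epi_of_epi_fac (biprod.inl_desc g (-r))
  IsSES.of_isLimit _ hP.isLimitKernelFork

namespace Ext1Zero

lemma exists_extension {X Y Z W : B} {f : X ⟶ Y} {g : Y ⟶ Z} (hZW : Ext1Zero Z W)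
    (h : IsSES f g) (a : X ⟶ W) : ∃ β : Y ⟶ W, f ≫ β = a := by
  have hP := IsPushout.of_hasPushout f a
  obtain ⟨π, hπ, -⟩ := h.of_isPushout hP
  obtain ⟨s, hs⟩ := hZW _ π hπ
  obtain ⟨t, ht⟩ := hπ.exists_retraction_of_section hs
  exact ⟨pushout.inl f a ≫ t, by rw [← assoc, hP.w, assoc, ht, comp_id]⟩

/-- Push the extension out along `Y ⟶ Y''`, split it, and pull the remaining extension of
`X` by `Y'` back along the splitting. -/
lemma of_isSES {X Y' Y Y'' : B} {ι : Y' ⟶ Y} {q : Y ⟶ Y''} (hY : IsSES ι q)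
    (h' : Ext1Zero X Y') (h'' : Ext1Zero X Y'') : Ext1Zero X Y := by
  intro M m π hm
  have := hm.mono
  have hP := IsPushout.of_hasPushout m q
  obtain ⟨π', hπ', hπ⟩ := hm.of_isPushout hP
  obtain ⟨s, hs⟩ := h'' _ π' hπ'
  have hQ := IsPullback.of_hasPullback (pushout.inl m q) s
  obtain ⟨u, hu, -⟩ := (hY.comp_of_isPushout hP).of_isPullback hQ
  obtain ⟨σ, hσ⟩ := h' u _ hu
  refine ⟨σ ≫ pullback.fst _ _, ?_⟩
  rw [← hπ, assoc, reassoc_of% hQ.w, hs, comp_id, hσ]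

end Ext1Zero

/-- Wakamatsu's lemma: by rigidity `k` extends over any extension `E` of `D₀ ∈ S` by `K`, and
the approximation property corrects that extension into a retraction of `K ⟶ E`. -/
lemma IsRightApprox.mem_rightPerp_of_isSES {S : Set B} (hS : Rigid S) {K D M : B}
    {k : K ⟶ D} {r : D ⟶ M} (hr : IsRightApprox S r) (h : IsSES k r) : K ∈ rightPerp S := by
  intro D₀ hD₀ E κ ρ hE
  have := h.mono
  obtain ⟨γ, hγ⟩ := (hS hD₀ hr.1).exists_extension hE k
  obtain ⟨φ₀, hφ₀⟩ := hE.exists_desc (t := γ ≫ r) (by rw [← assoc, hγ, h.zero])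
  obtain ⟨φ, hφ⟩ := hr.2 hD₀ φ₀
  obtain ⟨η, hη⟩ := h.exists_lift (t := γ - ρ ≫ φ) (by simp [hφ, hφ₀])
  refine hE.exists_section_of_retraction (r := η) ?_
  rw [← cancel_mono k, assoc, hη, Preadditive.comp_sub, hγ, reassoc_of% hE.zero, zero_comp,
    sub_zero, id_comp]

lemma RCP.exists_epi_isRightApprox [EnoughProjectives B] {S : Set B} (hS : RCP S) (M : B) :
    ∃ (D : B) (r : D ⟶ M), IsRightApprox S r ∧ Epi r := by
  obtain ⟨D, r, hD, hr⟩ := hS.contra M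
  refine ⟨D ⊞ Projective.over M, biprod.desc r (Projective.π M),
    ⟨hS.add.sum_closed hD (hS.proj_mem inferInstance), fun X hX g ↦ ?_⟩,
    epi_of_epi_fac (biprod.inr_desc _ _)⟩
  obtain ⟨h, rfl⟩ := hr hX g
  exact ⟨h ≫ biprod.inl, by rw [assoc, biprod.inl_desc]⟩

/-- With `0 → A → D_A → C_A → 0` and an epimorphic right `D`-approximation `D' → C_A`, take
`Z = D_A ×_{C_A} D'`. It is an extension of `D_A` by the kernel of the approximation, which lies
in `D^⊥¹` by Wakamatsu's lemma, and `0 → Z → D_A ⊞ D' → C_A → 0` puts it in `CoCone D C`. -/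
lemma exists_isSES_mem_rightPerp_inter_coCone [EnoughProjectives B] {C D : Set B}
    (hD : RCP D) {A : B} (hA : A ∈ CoCone D C) :
    ∃ (Z D' : B) (u : A ⟶ Z) (v : Z ⟶ D'),
      IsSES u v ∧ Z ∈ rightPerp D ∩ CoCone D C ∧ D' ∈ D := by
  obtain ⟨DA, CA, d, e, hDA, hCA, hA⟩ := hA
  obtain ⟨D', r, hr, _⟩ := hD.exists_epi_isRightApprox CA
  have := hA.epi
  have hP := IsPullback.of_hasPullback e r
  obtain ⟨u, hu, -⟩ := hA.of_isPullback hP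
  obtain ⟨κ, hκ, -⟩ := (IsSES.kernel_ι r).of_isPullback hP.flip
  have hK : kernel r ∈ rightPerp D := hr.mem_rightPerp_of_isSES hD.rigid (IsSES.kernel_ι r)
  refine ⟨_, D', u, _, hu, ⟨fun X hX ↦ (hK hX).of_isSES hκ (hD.rigid hX hDA), ?_⟩, hr.1⟩
  exact ⟨_, _, _, _, hD.add.sum_closed hDA hr.1, hCA, isSES_biprod_of_isPullback hP⟩

theorem statement_6_general {B : Type u} [Category.{v} B] [Abelian B]
    [EnoughProjectives B]
    (C D : Set B) (hD : RCP D)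
    {A X : B} (hA : A ∈ CoCone D C)
    (g : A ⟶ X) (h : FactorsThru (rightPerp D) g) :
    FactorsThru (rightPerp D ∩ CoCone D C) g := by
  obtain ⟨W, a, b, hW, rfl⟩ := h
  obtain ⟨Z, D', u, v, huv, hZ, hD'⟩ := exists_isSES_mem_rightPerp_inter_coCone hD hA
  obtain ⟨β, hβ⟩ := (hW hD').exists_extension huv a
  exact ⟨Z, u, β ≫ b, hZ, by rw [← assoc, hβ]⟩

/-- a morphism of `ℋ_𝒟` factoring through `𝒟^⊥¹` factors through
`𝒟^⊥¹ ∩ ℋ_𝒟`. -/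
theorem statement_6 {B : Type u} [Category.{v} B] [Abelian B]
    [EnoughProjectives B] [EnoughInjectives B]
    (C D : Set B) (hC : RCP C) (hD : RCP D) (hDC : D ⊆ C)
    {A X : B} (hA : A ∈ CoCone D C) (hX : X ∈ CoCone D C)
    (g : A ⟶ X) (h : FactorsThru (rightPerp D) g) :
    FactorsThru (rightPerp D ∩ CoCone D C) g :=
  statement_6_general C D hD hA g h

end CotorsionPaper
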